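/- Let f be a piecewise contracting interval map on X with attractor Λ. Then for every x ∈ Λ there exists a decreasing sequence {B_k}_{k≥1} of atoms (i.e. B_k ⊃ B_{k+1} for all k ≥ 1) such that x ∈ B_k ∈ 𝒜_k for all k ≥ 1 and ∩_{k≥1} B_k = {x}. -/

import Mathlib

open Set Filter Metric Topology

/-- A piecewise contracting interval map (PCIM) on the compact interval `X = [a,b]`:
there are `N ≥ 1` pairwise disjoint nonempty open (relative to `X`) subintervals
whose closures cover `X`, and `f` contracts with rate `lam ∈ (0,1)` on each piece. -/
structure PCIM where
  a : ℝ
  b : ℝ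
  hab : a < b
  N : ℕ
  hN : 1 ≤ N
  f : ℝ → ℝ
  lam : ℝ
  hlam₀ : 0 < lam
  hlam₁ : lam < 1
  piece : Fin N → Set ℝ
  piece_nonempty : ∀ i, (piece i).Nonempty
  piece_interval : ∀ i, ∃ c d : ℝ, piece i = Set.Ioo c d ∩ Set.Icc a b
  piece_disjoint : ∀ i j, i ≠ j → Disjoint (piece i) (piece j)
  cover : Set.Icc a b = ⋃ i, closure (piece i)
  mapsTo : Set.MapsTo f (Set.Icc a b) (Set.Icc a b)
  contract : ∀ i, ∀ x ∈ piece i, ∀ y ∈ piece i, |f x - f y| ≤ lam * |x - y|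

namespace PCIM

variable (P : PCIM)

/-- The underlying compact interval `X`. -/
def X : Set ℝ := Set.Icc P.a P.b

/-- `X* = ⋃ i, X_i`, the union of the contraction pieces. -/
def Xstar : Set ℝ := ⋃ i, P.piece i

/-- `Δ = X \ X*`, the set of boundaries of the contraction pieces. -/
def Delta : Set ℝ := P.X \ P.Xstar

/-- `X̃ = ⋂_{j ≥ 0} f⁻ʲ(X*)`, the points all of whose iterates are well defined. -/
def Xtilde : Set ℝ := ⋂ j : ℕ, (P.f^[j]) ⁻¹' P.Xstar

/-- `D`: the set of one-sided limits of `f` at the points of `Δ`. -/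
def D : Set ℝ :=
  {L | ∃ c ∈ P.Delta,
    ((𝓝[P.X ∩ Set.Iio c] c).NeBot ∧ Filter.Tendsto P.f (𝓝[P.X ∩ Set.Iio c] c) (𝓝 L)) ∨
    ((𝓝[P.X ∩ Set.Ioi c] c).NeBot ∧ Filter.Tendsto P.f (𝓝[P.X ∩ Set.Ioi c] c) (𝓝 L))}

/-- A set `A` is `f`-pseudo-invariant if for every `x ∈ A` at least one of the
one-sided limits of `f` at `x` belongs to `A`. -/
def PseudoInvariant (A : Set ℝ) : Prop :=
  ∀ x ∈ A,
    (∃ L ∈ A, (𝓝[P.X ∩ Set.Iio x] x).NeBot ∧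
      Filter.Tendsto P.f (𝓝[P.X ∩ Set.Iio x] x) (𝓝 L)) ∨
    (∃ L ∈ A, (𝓝[P.X ∩ Set.Ioi x] x).NeBot ∧
      Filter.Tendsto P.f (𝓝[P.X ∩ Set.Ioi x] x) (𝓝 L))

/-- `f` is piecewise monotonic: strictly monotone on each contraction piece. -/
def PiecewiseMonotonic : Prop :=
  ∀ i, StrictMonoOn P.f (P.piece i) ∨ StrictAntiOn P.f (P.piece i)

/-- `f` satisfies the separation property: it is piecewise monotonic and the closures
of the images of distinct pieces are disjoint. -/
def SeparationProperty : Prop :=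
  P.PiecewiseMonotonic ∧
    ∀ i j, i ≠ j → closure (P.f '' P.piece i) ∩ closure (P.f '' P.piece j) = ∅

/-- The iterates `Λ_n` defining the attractor: `Λ_0 = X`,
`Λ_{n+1} = cl (f (Λ_n \ Δ))`. -/
def LambdaIter : (P : PCIM) → ℕ → Set ℝ
  | Q, 0 => Q.X
  | Q, n + 1 => closure (Q.f '' (LambdaIter Q n \ Q.Delta))

/-- The attractor `Λ = ⋂_{n ≥ 1} Λ_n`. -/
def Lambda : Set ℝ := ⋂ n : ℕ, P.LambdaIter (n + 1)

/-- The atom associated to the word `w = [i₁, …, iₙ]`: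
`A_{i₁…iₙ} = F_{iₙ} ∘ ⋯ ∘ F_{i₁}(X)` where `F_i(A) = cl (f (A ∩ X_i))`. -/
def atomOf (w : List (Fin P.N)) : Set ℝ :=
  w.foldl (fun A i => closure (P.f '' (A ∩ P.piece i))) P.X

/-- `𝒜_n`: the set of (nonempty) atoms of generation `n`. -/
def atoms (n : ℕ) : Set (Set ℝ) :=
  {A | ∃ w : List (Fin P.N), w.length = n ∧ P.atomOf w = A ∧ A.Nonempty}

/-- `θ` is the itinerary of `x`: `f^t(x) ∈ X_{θ_t}` for all `t`. -/
def IsItinerary (x : ℝ) (θ : ℕ → Fin P.N) : Prop :=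
  ∀ t : ℕ, P.f^[t] x ∈ P.piece (θ t)

/-- The word `θ_t θ_{t+1} … θ_{t+n-1}` of length `n` of the sequence `θ`. -/
def word (θ : ℕ → Fin P.N) (t n : ℕ) : List (Fin P.N) :=
  (List.range n).map fun k => θ (t + k)

/-- `L_n(θ)`: the set of words of length `n` occurring in `θ`. -/
def lang (θ : ℕ → Fin P.N) (n : ℕ) : Set (List (Fin P.N)) :=
  {w | ∃ t : ℕ, w = P.word θ t n}

/-- The complexity function `p_θ(n) = #L_n(θ)`. -/
noncomputable def complexity (θ : ℕ → Fin P.N) (n : ℕ) : ℕ := (P.lang θ n).ncard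

/-- The forward orbit of `x` under `f`. -/
def orbit (x : ℝ) : Set ℝ := {y | ∃ k : ℕ, P.f^[k] x = y}

/-- The ω-limit set of `x` under `f`. -/
def omegaLimitSet (x : ℝ) : Set ℝ :=
  ⋂ n : ℕ, closure {y | ∃ m : ℕ, n ≤ m ∧ P.f^[m] x = y}

/-- A compact pseudo-invariant set `A` is `X̃`-minimal if the orbit of every point
of `A ∩ X̃` is dense in `A`. -/
def XtildeMinimal (A : Set ℝ) : Prop :=
  IsCompact A ∧ P.PseudoInvariant A ∧ ∀ x ∈ A ∩ P.Xtilde, A ⊆ closure (P.orbit x)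

/-- A periodic orbit contained in `X̃`. -/
def IsPeriodicOrbit (A : Set ℝ) : Prop :=
  ∃ x ∈ P.Xtilde, ∃ p : ℕ, 1 ≤ p ∧ P.f^[p] x = x ∧ A = P.orbit x

end PCIM

/-- A Cantor set: nonempty, compact, perfect and totally disconnected. -/
def IsCantorSet (A : Set ℝ) : Prop :=
  A.Nonempty ∧ IsCompact A ∧ Perfect A ∧ IsTotallyDisconnected A

/-!
Atoms of generation `n` cover `Λ_n`, and since `f` contracts by `λ` on each piece, an atom of
generation `n` has diameter at most `λⁿ · diam X`. Applying one more map first, i.e. prepending a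
letter to a word, shrinks its atom. Hence the words whose atom contains `x ∈ Λ` form a finitely
branching tree, under deletion of the first letter, with words of every length, and König's lemma
gives an infinite branch: nested atoms of every generation containing `x`, which shrink to `x`.
-/

def seqRevPrefix {α : Type*} (θ : ℕ → α) (k : ℕ) : List α :=
  (List.ofFn fun i : Fin k => θ i).reverse

section KoenigsLemma

variable {α : Type*}

@[simp]
lemma length_seqRevPrefix (θ : ℕ → α) (k : ℕ) : (seqRevPrefix θ k).length = k := by
  simp [seqRevPrefix]

lemma seqRevPrefix_succ (θ : ℕ → α) (k : ℕ) :
    seqRevPrefix θ (k + 1) = θ k :: seqRevPrefix θ k := by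
  rw [seqRevPrefix, List.ofFn_succ', List.concat_eq_append, List.reverse_append]
  rfl

lemma exists_seqRevPrefix_eq (w : List α) (a : α) :
    ∃ θ : ℕ → α, seqRevPrefix θ w.length = w := by
  refine ⟨fun i => w.reverse.getD i a, ?_⟩
  rw [seqRevPrefix, List.reverse_eq_iff]
  exact List.ext_getElem (by simp) fun i _ _ => by simp

lemma exists_seq_forall_seqRevPrefix [Finite α] (p : List α → Prop)
    (hp : ∀ a w, p (a :: w) → p w) (hex : ∀ k, ∃ w : List α, w.length = k ∧ p w) :
    ∃ θ : ℕ → α, ∀ k, p (seqRevPrefix θ k) := by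
  obtain ⟨w₁, hw₁, -⟩ := hex 1
  obtain ⟨a, -, -⟩ := List.exists_cons_of_length_eq_add_one hw₁
  let _ : TopologicalSpace α := ⊥
  have : DiscreteTopology α := ⟨rfl⟩
  set S : ℕ → Set (ℕ → α) := fun k => {θ | p (seqRevPrefix θ k)}
  have hS_closed (k : ℕ) : IsClosed (S k) :=
    (isClosed_discrete {v : Fin k → α | p (List.ofFn v).reverse}).preimage
      (f := fun (θ : ℕ → α) (i : Fin k) => θ i) (continuous_pi fun i => continuous_apply (i : ℕ))
  have hS_anti (k : ℕ) : S (k + 1) ⊆ S k := fun θ hθ => by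
    simp only [S, mem_ofPred_eq, seqRevPrefix_succ] at hθ ⊢
    exact hp _ _ hθ
  have hS_nonempty (k : ℕ) : (S k).Nonempty := by
    obtain ⟨w, rfl, hw⟩ := hex k
    obtain ⟨θ, hθ⟩ := exists_seqRevPrefix_eq w a
    exact ⟨θ, by simpa [S, hθ] using hw⟩
  obtain ⟨θ, hθ⟩ := IsCompact.nonempty_iInter_of_sequence_nonempty_isCompact_isClosed S
    hS_anti hS_nonempty (hS_closed 0).isCompact hS_closed
  exact ⟨θ, mem_iInter.mp hθ⟩

end KoenigsLemma

namespace PCIM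

variable (P : PCIM)

lemma piece_subset_X (i : Fin P.N) : P.piece i ⊆ P.X := by
  obtain ⟨c, d, h⟩ := P.piece_interval i
  exact h ▸ inter_subset_right

lemma atomOf_append_singleton (w : List (Fin P.N)) (i : Fin P.N) :
    P.atomOf (w ++ [i]) = closure (P.f '' (P.atomOf w ∩ P.piece i)) := by
  rw [atomOf, List.foldl_append]
  rfl

lemma isClosed_atomOf (w : List (Fin P.N)) : IsClosed (P.atomOf w) := by
  induction w using List.reverseRecOn with
  | nil => exact isClosed_Icc
  | append_singleton w i _ => exact P.atomOf_append_singleton w i ▸ isClosed_closure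

lemma atomOf_subset_X (w : List (Fin P.N)) : P.atomOf w ⊆ P.X := by
  induction w using List.reverseRecOn with
  | nil => exact subset_rfl
  | append_singleton w i _ =>
    rw [atomOf_append_singleton]
    refine closure_minimal ?_ isClosed_Icc
    rintro _ ⟨y, ⟨-, hy⟩, rfl⟩
    exact P.mapsTo (P.piece_subset_X i hy)

lemma isBounded_atomOf (w : List (Fin P.N)) : Bornology.IsBounded (P.atomOf w) :=
  (isBounded_Icc P.a P.b).subset (P.atomOf_subset_X w)

lemma atomOf_cons_subset (i : Fin P.N) (w : List (Fin P.N)) :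
    P.atomOf (i :: w) ⊆ P.atomOf w := by
  induction w using List.reverseRecOn with
  | nil => exact P.atomOf_subset_X [i]
  | append_singleton w j ih =>
    rw [← List.cons_append, atomOf_append_singleton, atomOf_append_singleton]
    exact closure_mono (image_mono (inter_subset_inter_left _ ih))

lemma diam_image_inter_piece_le {A : Set ℝ} (hA : Bornology.IsBounded A) (i : Fin P.N) :
    diam (P.f '' (A ∩ P.piece i)) ≤ P.lam * diam A := by
  refine diam_le_of_forall_dist_le (mul_nonneg P.hlam₀.le diam_nonneg) ?_
  rintro _ ⟨y, ⟨hyA, hy⟩, rfl⟩ _ ⟨z, ⟨hzA, hz⟩, rfl⟩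
  calc dist (P.f y) (P.f z) ≤ P.lam * dist y z := P.contract i y hy z hz
    _ ≤ P.lam * diam A := mul_le_mul_of_nonneg_left (dist_le_diam_of_mem hA hyA hzA) P.hlam₀.le

lemma diam_atomOf_le (w : List (Fin P.N)) :
    diam (P.atomOf w) ≤ P.lam ^ w.length * diam P.X := by
  induction w using List.reverseRecOn with
  | nil => simp [atomOf]
  | append_singleton w i ih =>
    calc diam (P.atomOf (w ++ [i])) ≤ P.lam * diam (P.atomOf w) := by
          rw [atomOf_append_singleton, diam_closure]
          exact P.diam_image_inter_piece_le (P.isBounded_atomOf w) i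
      _ ≤ P.lam * (P.lam ^ w.length * diam P.X) := mul_le_mul_of_nonneg_left ih P.hlam₀.le
      _ = P.lam ^ (w ++ [i]).length * diam P.X := by simp [pow_succ]; ring

lemma eq_of_eventually_mem_atomOf {x y : ℝ} (h : ∀ᶠ n in atTop,
    ∃ w : List (Fin P.N), w.length = n ∧ x ∈ P.atomOf w ∧ y ∈ P.atomOf w) : x = y := by
  have hdist : ∀ᶠ n in atTop, dist x y ≤ P.lam ^ n * diam P.X := by
    filter_upwards [h] with n hn
    obtain ⟨w, rfl, hx, hy⟩ := hn
    exact (dist_le_diam_of_mem (P.isBounded_atomOf w) hx hy).trans (P.diam_atomOf_le w)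
  have hlim : Tendsto (fun n => P.lam ^ n * diam P.X) atTop (𝓝 0) := by
    simpa using (tendsto_pow_atTop_nhds_zero_of_lt_one P.hlam₀.le P.hlam₁).mul_const (diam P.X)
  exact dist_le_zero.mp (ge_of_tendsto hlim hdist)

lemma lambdaIter_subset_iUnion_atomOf (n : ℕ) :
    P.LambdaIter n ⊆ ⋃ w ∈ {w : List (Fin P.N) | w.length = n}, P.atomOf w := by
  induction n with
  | zero => exact fun x hx => mem_iUnion₂.mpr ⟨[], rfl, hx⟩
  | succ n ih =>
    refine closure_minimal ?_
      ((List.finite_length_eq _ _).isClosed_biUnion fun w _ => P.isClosed_atomOf w)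
    rintro _ ⟨y, ⟨hyn, hyΔ⟩, rfl⟩
    obtain ⟨w, hw, hy⟩ := mem_iUnion₂.mp (ih hyn)
    have hy_star : y ∈ P.Xstar := by
      by_contra h
      exact hyΔ ⟨P.atomOf_subset_X w hy, h⟩
    obtain ⟨i, hi⟩ := mem_iUnion.mp hy_star
    refine mem_iUnion₂.mpr ⟨w ++ [i], by simpa using hw, ?_⟩
    rw [atomOf_append_singleton]
    exact subset_closure ⟨y, ⟨hy, hi⟩, rfl⟩

lemma exists_mem_atomOf_of_mem_lambda {x : ℝ} (hx : x ∈ P.Lambda) (n : ℕ) :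
    ∃ w : List (Fin P.N), w.length = n ∧ x ∈ P.atomOf w := by
  obtain ⟨w, hw, hxw⟩ :=
    mem_iUnion₂.mp (P.lambdaIter_subset_iUnion_atomOf (n + 1) (mem_iInter.mp hx n))
  obtain ⟨i, w, rfl⟩ := List.exists_cons_of_length_eq_add_one hw
  exact ⟨w, by simpa using hw, P.atomOf_cons_subset i w hxw⟩

end PCIM

/-- Every point `x` of the attractor `Λ` lies in a decreasing
sequence of atoms `B_k ∈ 𝒜_k` (for `k ≥ 1`) whose intersection is `{x}`. -/
theorem exists_decreasing_atoms (P : PCIM) :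
    ∀ x ∈ P.Lambda, ∃ B : ℕ → Set ℝ,
      (∀ k : ℕ, 1 ≤ k → x ∈ B k ∧ B k ∈ P.atoms k) ∧
      (∀ k : ℕ, 1 ≤ k → B (k + 1) ⊆ B k) ∧
      (⋂ k : ℕ, ⋂ (_ : 1 ≤ k), B k) = {x} := by
  intro x hx
  obtain ⟨θ, hθ⟩ := exists_seq_forall_seqRevPrefix (fun w => x ∈ P.atomOf w)
    (fun i w hxw => P.atomOf_cons_subset i w hxw) (P.exists_mem_atomOf_of_mem_lambda hx)
  refine ⟨fun k => P.atomOf (seqRevPrefix θ k), fun k _ => ⟨hθ k, _, by simp, rfl, x, hθ k⟩,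
    fun k _ => by simpa only [seqRevPrefix_succ] using P.atomOf_cons_subset (θ k) _, ?_⟩
  refine eq_singleton_iff_unique_mem.mpr ⟨mem_iInter₂.mpr fun k _ => hθ k, fun y hy => ?_⟩
  refine (P.eq_of_eventually_mem_atomOf (eventually_atTop.mpr ⟨1, fun k hk => ?_⟩)).symm
  exact ⟨seqRevPrefix θ k, by simp, hθ k, mem_iInter₂.mp hy k hk⟩
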